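/- arXiv:1612.04906 — 2 statements merged into one kernel-verified Lean document; each statement's English description precedes it below -/
import Mathlib

section
/- Let M ∈ SL(2,ℝ), let r = (r₁,r₂) and s = (s₁,s₂) be as in the proof of the three gap theorem: r ∈ A ∩ ℤ²M with minimal second coordinate, s ∈ (A ∩ ℤ²M) \ ℤr with minimal second coordinate, s₂ > r₂, and r₁s₁ < 0, where A = (-1,1) × (0,∞). Set J_r = (0,1] ∩ (-r₁, 1-r₁] and J_s = (0,1] ∩ (-s₁, 1-s₁]. Then for all t ∈ (0,1]: F(M,t) = r₂ if t ∈ J_r; F(M,t) = s₂ if t ∈ J_s \ J_r; and F(M,t) = r₂ + s₂ if t ∈ (0,1] \ (J_r ∪ J_s). -/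
open Matrix Set

noncomputable section

/-- The lattice ℤ²M (row-vector convention). -/
def lat (M : Matrix.SpecialLinearGroup (Fin 2) ℝ) : Set (ℝ × ℝ) :=
  { p | ∃ m n : ℤ, p = ((m : ℝ) * M.1 0 0 + (n : ℝ) * M.1 1 0,
                        (m : ℝ) * M.1 0 1 + (n : ℝ) * M.1 1 1) }

/-- The set { y > 0 : (x,y) ∈ ℤ²M, -t < x ≤ 1-t }. -/
def Fset (M : Matrix.SpecialLinearGroup (Fin 2) ℝ) (t : ℝ) : Set ℝ :=
  { y | 0 < y ∧ ∃ x : ℝ, (x, y) ∈ lat M ∧ -t < x ∧ x ≤ 1 - t }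

/-- F(M,t) = min{ y > 0 : (x,y) ∈ ℤ²M, -t < x ≤ 1-t }. -/
noncomputable def F (M : Matrix.SpecialLinearGroup (Fin 2) ℝ) (t : ℝ) : ℝ :=
  sInf (Fset M t)

/-- The set of positive values (ℓ-k)α + n with 0 < ℓ ≤ N. -/
def gapSet (α : ℝ) (N k : ℤ) : Set ℝ :=
  { v | 0 < v ∧ ∃ l n : ℤ, 0 < l ∧ l ≤ N ∧ v = ((l : ℝ) - (k : ℝ)) * α + (n : ℝ) }

/-- s_{k,N}: the gap from {kα} to its next neighbor among {α},...,{Nα}. -/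
noncomputable def gap (α : ℝ) (N k : ℤ) : ℝ := sInf (gapSet α N k)

/-- The region A = (-1,1) × (0,∞). -/
def regA : Set (ℝ × ℝ) := Set.Ioo (-1 : ℝ) 1 ×ˢ Set.Ioi (0 : ℝ)

/-! Points of `lat M` in the strip `(-t, 1 - t] × (0, ∞)` lie in `regA`, so `F M t ≥ r.2`, with
equality when the window `(-t, 1 - t]` contains `r.1`. The window contains `0` and is convex, so if
it misses `r.1` it misses every positive multiple of `r`, and then `F M t ≥ s.2`, with equality when
it contains `s.1`. If it misses both, the opposite signs of `r.1` and `s.1` put them on opposite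
sides of the window and `r + s` inside it. A lattice point `p` of the window lower than `r + s`
would have `p - r` or `p - s` in `regA`, lower than `s` resp. `r`: minimality of `s` makes `p` a
multiple of `r`, minimality of `r` makes `p = s` (a short horizontal lattice vector `p - s ≠ 0`
would move `r` to a point of `regA` at height `r.2` which is not a multiple of `r`). -/

def latAddSubgroup (M : Matrix.SpecialLinearGroup (Fin 2) ℝ) : AddSubgroup (ℝ × ℝ) where
  carrier := lat M
  zero_mem' := ⟨0, 0, by ext <;> simp⟩
  add_mem' := by
    rintro _ _ ⟨m, n, rfl⟩ ⟨m', n', rfl⟩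
    exact ⟨m + m', n + n', by ext <;> simp <;> ring⟩
  neg_mem' := by
    rintro _ ⟨m, n, rfl⟩
    exact ⟨-m, -n, by ext <;> simp <;> ring⟩

lemma F_eq_of_forall_snd_le {M : Matrix.SpecialLinearGroup (Fin 2) ℝ} {t : ℝ} {p : ℝ × ℝ}
    (hp : p ∈ lat M) (hp₁ : p.1 ∈ Ioc (-t) (1 - t)) (hp₂ : 0 < p.2)
    (hle : ∀ q ∈ lat M, q.1 ∈ Ioc (-t) (1 - t) → 0 < q.2 → p.2 ≤ q.2) :
    F M t = p.2 :=
  IsLeast.csInf_eq ⟨⟨hp₂, p.1, hp, hp₁⟩, fun _ ⟨hy, x, hxy, hx⟩ => hle (x, _) hxy hx hy⟩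

lemma mem_Ioc_neg_sub_iff {a t : ℝ} : t ∈ Ioc (-a) (1 - a) ↔ a ∈ Ioc (-t) (1 - t) := by
  simp only [mem_Ioc]
  constructor <;> rintro ⟨h₁, h₂⟩ <;> constructor <;> linarith

lemma mem_of_mul_mem_Ioc {a b k x : ℝ} (ha : a < 0) (hb : 0 ≤ b) (hk : 1 ≤ k)
    (h : k * x ∈ Ioc a b) : x ∈ Ioc a b := by
  have hk₀ : k ≠ 0 := by positivity
  have := (convex_Ioc a b).smul_mem_of_zero_mem ⟨ha, hb⟩ h ⟨by positivity, inv_le_one_of_one_le₀ hk⟩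
  rwa [smul_eq_mul, inv_mul_cancel_left₀ hk₀] at this

lemma lt_and_le_of_notMem_Ioc {a b t : ℝ} (ht : t ∈ Ioc 0 1) (hab : a * b < 0)
    (ha : a ∉ Ioc (-t) (1 - t)) (hb : b ∉ Ioc (-t) (1 - t)) :
    (1 - t < a ∧ b ≤ -t) ∨ (a ≤ -t ∧ 1 - t < b) := by
  simp only [mem_Ioc, not_and_or, not_lt, not_le] at ha hb
  obtain ⟨ht₀, ht₁⟩ := ht
  rcases mul_neg_iff.mp hab with ⟨ha₀, hb₀⟩ | ⟨ha₀, hb₀⟩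
  · left; constructor
    · exact ha.resolve_left (by linarith)
    · exact hb.resolve_right (by linarith)
  · right; constructor
    · exact ha.resolve_right (by linarith)
    · exact hb.resolve_left (by linarith)

lemma add_mem_Ioc_of_notMem_Ioc {a b t : ℝ} (ht : t ∈ Ioc 0 1) (ha : a ∈ Ioo (-1) 1)
    (hb : b ∈ Ioo (-1) 1) (hab : a * b < 0)
    (ha' : a ∉ Ioc (-t) (1 - t)) (hb' : b ∉ Ioc (-t) (1 - t)) :
    a + b ∈ Ioc (-t) (1 - t) := by
  obtain ⟨ha₁, ha₂⟩ := ha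
  obtain ⟨hb₁, hb₂⟩ := hb
  rcases lt_and_le_of_notMem_Ioc ht hab ha' hb' with ⟨h₁, h₂⟩ | ⟨h₁, h₂⟩ <;>
    constructor <;> linarith

lemma sub_mem_Ioo_or_sub_mem_Ioo {a b t x : ℝ} (ht : t ∈ Ioc 0 1) (ha : a ∈ Ioo (-1) 1)
    (hb : b ∈ Ioo (-1) 1) (hab : a * b < 0)
    (ha' : a ∉ Ioc (-t) (1 - t)) (hb' : b ∉ Ioc (-t) (1 - t)) (hx : x ∈ Ioc (-t) (1 - t)) :
    x - a ∈ Ioo (-1) 1 ∨ x - b ∈ Ioo (-1) 1 := by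
  obtain ⟨ha₁, ha₂⟩ := ha
  obtain ⟨hb₁, hb₂⟩ := hb
  obtain ⟨hx₁, hx₂⟩ := hx
  simp only [mem_Ioo]
  rcases lt_and_le_of_notMem_Ioc ht hab ha' hb' with ⟨h₁, h₂⟩ | ⟨h₁, h₂⟩
  · by_cases hxa : -1 < x - a
    · exact Or.inl ⟨hxa, by linarith⟩
    · exact Or.inr ⟨by linarith, by linarith⟩
  · by_cases hxa : x - a < 1
    · exact Or.inl ⟨by linarith, hxa⟩
    · exact Or.inr ⟨by linarith, by linarith⟩

section AddSubgroup

variable {L : AddSubgroup (ℝ × ℝ)} {r s p : ℝ × ℝ} {t : ℝ}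

lemma mem_regA_of_fst_mem_Ioc (ht : t ∈ Ioc 0 1) (hp₁ : p.1 ∈ Ioc (-t) (1 - t))
    (hp₂ : 0 < p.2) : p ∈ regA :=
  ⟨⟨by linarith [ht.2, hp₁.1], by linarith [ht.1, hp₁.2]⟩, hp₂⟩

lemma fst_mem_Ioc_of_zsmul (ht : t ∈ Ioc 0 1) (hr₂ : 0 < r.2) {k : ℤ}
    (h₁ : (k • r).1 ∈ Ioc (-t) (1 - t)) (h₂ : 0 < (k • r).2) : r.1 ∈ Ioc (-t) (1 - t) := by
  rw [Prod.smul_fst, zsmul_eq_mul] at h₁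
  rw [Prod.smul_snd, zsmul_eq_mul] at h₂
  have hk₀ : (0 : ℤ) < k := Int.cast_pos.mp (pos_of_mul_pos_left h₂ hr₂.le)
  have hk : (1 : ℝ) ≤ k := by exact_mod_cast hk₀
  exact mem_of_mul_mem_Ioc (by linarith [ht.1]) (by linarith [ht.2]) hk h₁

lemma exists_eq_zsmul_of_snd_lt
    (hsmin : ∀ p ∈ regA ∩ (L : Set (ℝ × ℝ)), (∀ k : ℤ, p ≠ k • r) → s.2 ≤ p.2)
    (hp : p ∈ regA ∩ (L : Set (ℝ × ℝ))) (hps : p.2 < s.2) : ∃ k : ℤ, p = k • r := by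
  by_contra! h
  exact hps.not_ge (hsmin p hp h)

lemma eq_zero_of_add_mk_zero_mem (hr₂ : 0 < r.2)
    (hsmin : ∀ p ∈ regA ∩ (L : Set (ℝ × ℝ)), (∀ k : ℤ, p ≠ k • r) → s.2 ≤ p.2)
    (hlt : r.2 < s.2) {a : ℝ} (h : r + (a, 0) ∈ regA ∩ (L : Set (ℝ × ℝ))) : a = 0 := by
  obtain ⟨k, hk⟩ := exists_eq_zsmul_of_snd_lt hsmin h (by simpa using hlt)
  have h₁ := congrArg Prod.fst hk
  have h₂ := congrArg Prod.snd hk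
  rw [Prod.fst_add, Prod.smul_fst, zsmul_eq_mul] at h₁
  rw [Prod.snd_add, Prod.smul_snd, zsmul_eq_mul, add_zero] at h₂
  have hk₁ : (k : ℝ) = 1 := by
    have : ((k : ℝ) - 1) * r.2 = 0 := by linarith
    linarith [(mul_eq_zero.mp this).resolve_right hr₂.ne']
  rw [hk₁] at h₁
  linarith

lemma eq_zero_of_mk_zero_mem (hr : r ∈ regA ∩ (L : Set (ℝ × ℝ)))
    (hsmin : ∀ p ∈ regA ∩ (L : Set (ℝ × ℝ)), (∀ k : ℤ, p ≠ k • r) → s.2 ≤ p.2)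
    (hlt : r.2 < s.2) {a : ℝ} (ha : ((a, 0) : ℝ × ℝ) ∈ L) (ha₁ : |a| < 1) : a = 0 := by
  wlog ha₀ : 0 ≤ a generalizing a
  · have := this (a := -a) (by simpa using L.neg_mem ha) (by rwa [abs_neg]) (by linarith)
    linarith
  obtain ⟨⟨⟨hr₁, hr₁'⟩, hr₂⟩, hrL⟩ := hr
  have ha₁' : a < 1 := (le_abs_self a).trans_lt ha₁
  rcases le_or_gt 0 r.1 with h | h
  · have := eq_zero_of_add_mk_zero_mem hr₂ hsmin hlt (a := -a)
      ⟨⟨⟨by simp; linarith, by simp; linarith⟩, by simpa using hr₂⟩,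
        by simpa using L.add_mem hrL (L.neg_mem ha)⟩
    linarith
  · exact eq_zero_of_add_mk_zero_mem hr₂ hsmin hlt
      ⟨⟨⟨by simp; linarith, by simp; linarith⟩, by simpa using hr₂⟩, L.add_mem hrL ha⟩

lemma exists_eq_zsmul_of_sub_mem_Ioo (hrL : r ∈ L)
    (hsmin : ∀ p ∈ regA ∩ (L : Set (ℝ × ℝ)), (∀ k : ℤ, p ≠ k • r) → s.2 ≤ p.2)
    (hlt : r.2 < s.2) (hp : p ∈ L) (hp₁ : p.1 - r.1 ∈ Ioo (-1) 1) (hsp : s.2 ≤ p.2)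
    (hp₂ : p.2 < r.2 + s.2) : ∃ k : ℤ, p = k • r := by
  obtain ⟨k, hk⟩ := exists_eq_zsmul_of_snd_lt hsmin (p := p - r)
    ⟨⟨hp₁, show 0 < p.2 - r.2 by linarith⟩, L.sub_mem hp hrL⟩ (show p.2 - r.2 < s.2 by linarith)
  exact ⟨k + 1, by rw [add_zsmul, one_zsmul, ← hk, sub_add_cancel]⟩

lemma eq_of_sub_mem_Ioo (hr : r ∈ regA ∩ (L : Set (ℝ × ℝ)))
    (hrmin : ∀ p ∈ regA ∩ (L : Set (ℝ × ℝ)), r.2 ≤ p.2) (hsL : s ∈ L)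
    (hsmin : ∀ p ∈ regA ∩ (L : Set (ℝ × ℝ)), (∀ k : ℤ, p ≠ k • r) → s.2 ≤ p.2)
    (hlt : r.2 < s.2) (hp : p ∈ L) (hp₁ : p.1 - s.1 ∈ Ioo (-1) 1) (hsp : s.2 ≤ p.2)
    (hp₂ : p.2 < r.2 + s.2) : p = s := by
  rcases hsp.eq_or_lt with h | h
  · have hps : p - s = (p.1 - s.1, 0) := Prod.ext rfl (by simp [h])
    have := eq_zero_of_mk_zero_mem hr hsmin hlt (hps ▸ L.sub_mem hp hsL) (abs_lt.mpr hp₁)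
    exact Prod.ext (by linarith) h.symm
  · have := hrmin (p - s) ⟨⟨hp₁, show 0 < p.2 - s.2 by linarith⟩, L.sub_mem hp hsL⟩
    simp only [Prod.snd_sub] at this
    linarith

lemma snd_le_of_fst_notMem_Ioc (ht : t ∈ Ioc 0 1) (hr₂ : 0 < r.2)
    (hsmin : ∀ p ∈ regA ∩ (L : Set (ℝ × ℝ)), (∀ k : ℤ, p ≠ k • r) → s.2 ≤ p.2)
    (hr₁ : r.1 ∉ Ioc (-t) (1 - t)) (hp : p ∈ L) (hp₁ : p.1 ∈ Ioc (-t) (1 - t))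
    (hp₂ : 0 < p.2) : s.2 ≤ p.2 :=
  hsmin p ⟨mem_regA_of_fst_mem_Ioc ht hp₁ hp₂, hp⟩ fun _ hk =>
    hr₁ (fst_mem_Ioc_of_zsmul ht hr₂ (hk ▸ hp₁) (hk ▸ hp₂))

lemma add_snd_le_of_fst_notMem_Ioc (ht : t ∈ Ioc 0 1) (hr : r ∈ regA ∩ (L : Set (ℝ × ℝ)))
    (hrmin : ∀ p ∈ regA ∩ (L : Set (ℝ × ℝ)), r.2 ≤ p.2) (hs : s ∈ regA ∩ (L : Set (ℝ × ℝ)))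
    (hsmin : ∀ p ∈ regA ∩ (L : Set (ℝ × ℝ)), (∀ k : ℤ, p ≠ k • r) → s.2 ≤ p.2)
    (hlt : r.2 < s.2) (hsign : r.1 * s.1 < 0)
    (hr₁ : r.1 ∉ Ioc (-t) (1 - t)) (hs₁ : s.1 ∉ Ioc (-t) (1 - t))
    (hp : p ∈ L) (hp₁ : p.1 ∈ Ioc (-t) (1 - t)) (hp₂ : 0 < p.2) : r.2 + s.2 ≤ p.2 := by
  by_contra! hlt'
  have hsp := snd_le_of_fst_notMem_Ioc ht hr.1.2 hsmin hr₁ hp hp₁ hp₂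
  rcases sub_mem_Ioo_or_sub_mem_Ioo ht hr.1.1 hs.1.1 hsign hr₁ hs₁ hp₁ with h | h
  · obtain ⟨k, rfl⟩ := exists_eq_zsmul_of_sub_mem_Ioo hr.2 hsmin hlt hp h hsp hlt'
    exact hr₁ (fst_mem_Ioc_of_zsmul ht hr.1.2 hp₁ hp₂)
  · exact hs₁ (eq_of_sub_mem_Ioo hr hrmin hs.2 hsmin hlt hp h hsp hlt' ▸ hp₁)

end AddSubgroup

theorem F_formula_general (M : Matrix.SpecialLinearGroup (Fin 2) ℝ)
    (r s : ℝ × ℝ)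
    (hr : r ∈ regA ∩ lat M)
    (hrmin : ∀ p ∈ regA ∩ lat M, r.2 ≤ p.2)
    (hs : s ∈ regA ∩ lat M)
    (hsmin : ∀ p ∈ regA ∩ lat M, (∀ k : ℤ, p ≠ k • r) → s.2 ≤ p.2)
    (hlt : r.2 < s.2)
    (hsign : r.1 * s.1 < 0) :
    ∀ t : ℝ, t ∈ Set.Ioc (0 : ℝ) 1 →
      (t ∈ Set.Ioc (0 : ℝ) 1 ∩ Set.Ioc (-r.1) (1 - r.1) → F M t = r.2) ∧
      (t ∈ (Set.Ioc (0 : ℝ) 1 ∩ Set.Ioc (-s.1) (1 - s.1)) \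
            (Set.Ioc (0 : ℝ) 1 ∩ Set.Ioc (-r.1) (1 - r.1)) → F M t = s.2) ∧
      (t ∉ (Set.Ioc (0 : ℝ) 1 ∩ Set.Ioc (-r.1) (1 - r.1)) ∪
            (Set.Ioc (0 : ℝ) 1 ∩ Set.Ioc (-s.1) (1 - s.1)) →
        F M t = r.2 + s.2) := by
  intro t ht
  have hr₁ : r.1 ∈ Ioc (-t) (1 - t) ↔ t ∈ Ioc 0 1 ∩ Ioc (-r.1) (1 - r.1) := by
    rw [mem_inter_iff, and_iff_right ht, mem_Ioc_neg_sub_iff]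
  have hs₁ : s.1 ∈ Ioc (-t) (1 - t) ↔ t ∈ Ioc 0 1 ∩ Ioc (-s.1) (1 - s.1) := by
    rw [mem_inter_iff, and_iff_right ht, mem_Ioc_neg_sub_iff]
  refine ⟨fun h => ?_, fun ⟨hJs, hJr⟩ => ?_, fun h => ?_⟩
  · exact F_eq_of_forall_snd_le hr.2 (hr₁.mpr h) hr.1.2 fun q hq hq₁ hq₂ =>
      hrmin q ⟨mem_regA_of_fst_mem_Ioc ht hq₁ hq₂, hq⟩
  · exact F_eq_of_forall_snd_le hs.2 (hs₁.mpr hJs) hs.1.2 fun q hq hq₁ hq₂ =>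
      snd_le_of_fst_notMem_Ioc (L := latAddSubgroup M) ht hr.1.2 hsmin (hr₁.not.mpr hJr) hq hq₁ hq₂
  · rw [mem_union, not_or, ← hr₁, ← hs₁] at h
    exact F_eq_of_forall_snd_le (p := r + s) ((latAddSubgroup M).add_mem hr.2 hs.2)
      (add_mem_Ioc_of_notMem_Ioc ht hr.1.1 hs.1.1 hsign h.1 h.2) (add_pos hr.1.2 hs.1.2)
      fun q hq hq₁ hq₂ => add_snd_le_of_fst_notMem_Ioc (L := latAddSubgroup M) ht hr hrmin hs
        hsmin hlt hsign h.1 h.2 hq hq₁ hq₂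

/-- The explicit formula for F(M,t) in terms of the intervals J_r and J_s. -/
theorem F_formula (M : Matrix.SpecialLinearGroup (Fin 2) ℝ)
    (r s : ℝ × ℝ)
    (hr : r ∈ regA ∩ lat M)
    (hrmin : ∀ p ∈ regA ∩ lat M, r.2 ≤ p.2)
    (hs : s ∈ regA ∩ lat M)
    (hsr : ∀ k : ℤ, s ≠ k • r)
    (hsmin : ∀ p ∈ regA ∩ lat M, (∀ k : ℤ, p ≠ k • r) → s.2 ≤ p.2)
    (hlt : r.2 < s.2)
    (hsign : r.1 * s.1 < 0) :
    ∀ t : ℝ, t ∈ Set.Ioc (0 : ℝ) 1 →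
      (t ∈ Set.Ioc (0 : ℝ) 1 ∩ Set.Ioc (-r.1) (1 - r.1) → F M t = r.2) ∧
      (t ∈ (Set.Ioc (0 : ℝ) 1 ∩ Set.Ioc (-s.1) (1 - s.1)) \
            (Set.Ioc (0 : ℝ) 1 ∩ Set.Ioc (-r.1) (1 - r.1)) → F M t = s.2) ∧
      (t ∉ (Set.Ioc (0 : ℝ) 1 ∩ Set.Ioc (-r.1) (1 - r.1)) ∪
            (Set.Ioc (0 : ℝ) 1 ∩ Set.Ioc (-s.1) (1 - s.1)) →
        F M t = r.2 + s.2) :=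
  F_formula_general M r s hr hrmin hs hsmin hlt hsign
end
end

section
/- Let L be a lattice in ℝ² with basis vectors r = (r₁,r₂) and s = (s₁,s₂), where r₂, s₂ > 0, |r₁| < 1, |s₁| < 1, and r₁s₁ < 0. For t ∈ (0,1], the minimum min{ y > 0 : (x,y) ∈ L, -t < x ≤ 1-t } is attained at one of the points r, s, or r + s. -/
/-!
If `r` lies in the window `(-t, 1-t]` it is the lowest point there, by minimality of `r.2`.
Otherwise no positive multiple of `r` lies in the window, so if `s` does, it is the lowest point by
minimality of `s.2`. If neither does, `r` and `s` lie on opposite sides of the window, `r + s` lies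
in it, and every lattice point `q` of positive height in the window has `q.1` strictly between
`r.1` and `s.1`. Then either `q - r` is a point of `A` off `ℤ r`, or `q - s` has first coordinate
in `(-1, 0) ∪ (0, 1)` and non-negative height; in both cases `q.2 ≥ r.2 + s.2`. The height of
`q - s` cannot be `0`: a lattice point `(x, 0)` with `0 < |x| < 1` would make `r ∓ (x, 0)` a point
of `A` off `ℤ r` of height `r.2 < s.2`.
-/

open Matrix Set

noncomputable section

open Submodule

lemma mem_regA_iff {p : ℝ × ℝ} : p ∈ regA ↔ |p.1| < 1 ∧ 0 < p.2 := by
  simp [regA, abs_lt, and_assoc]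

lemma setOf_exists_zsmul_add_zsmul (r s : ℝ × ℝ) :
    {p : ℝ × ℝ | ∃ m n : ℤ, p = m • r + n • s} = span ℤ {r, s} := by
  ext p
  simp [mem_span_pair, eq_comm]

lemma abs_sub_lt_one_of_mem_uIoo {a b x : ℝ} (ha : |a| < 1) (hb : |b| < 1) (hx : x ∈ uIoo a b)
    (hxa : 1 ≤ |x - a|) : |x - b| < 1 := by
  rw [abs_lt] at ha hb ⊢
  rw [uIoo_eq_union] at hx
  rcases hx with ⟨h₁, h₂⟩ | ⟨h₁, h₂⟩
  · rw [abs_of_pos (by linarith)] at hxa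
    constructor <;> linarith
  · rw [abs_of_neg (by linarith)] at hxa
    constructor <;> linarith

lemma add_mem_Ioc_of_notMem {t a b : ℝ} (ht : 0 < t) (ht1 : t ≤ 1) (ha : |a| < 1) (hb : |b| < 1)
    (hab : a * b < 0) (ha' : a ∉ Ioc (-t) (1 - t)) (hb' : b ∉ Ioc (-t) (1 - t)) :
    a + b ∈ Ioc (-t) (1 - t) := by
  rw [abs_lt] at ha hb
  simp only [mem_Ioc, not_and_or, not_lt, not_le] at ha' hb' ⊢
  rcases lt_or_gt_of_ne (left_ne_zero_of_mul hab.ne) with h | h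
  · have : 0 < b := by nlinarith
    constructor <;> rcases ha' with ha' | ha' <;> rcases hb' with hb' | hb' <;> linarith
  · have : b < 0 := by nlinarith
    constructor <;> rcases ha' with ha' | ha' <;> rcases hb' with hb' | hb' <;> linarith

lemma Ioc_subset_uIoo_of_notMem {t a b : ℝ} (ht : 0 < t) (ht1 : t ≤ 1) (hab : a * b < 0)
    (ha' : a ∉ Ioc (-t) (1 - t)) (hb' : b ∉ Ioc (-t) (1 - t)) : Ioc (-t) (1 - t) ⊆ uIoo a b := by
  rintro x ⟨hx₁, hx₂⟩
  simp only [mem_Ioc, not_and_or, not_lt, not_le] at ha' hb'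
  rcases lt_or_gt_of_ne (left_ne_zero_of_mul hab.ne) with h | h
  · have : 0 < b := by nlinarith
    apply mem_uIoo_of_lt <;> rcases ha' with ha' | ha' <;> rcases hb' with hb' | hb' <;> linarith
  · have : b < 0 := by nlinarith
    apply mem_uIoo_of_gt <;> rcases ha' with ha' | ha' <;> rcases hb' with hb' | hb' <;> linarith

variable {r s : ℝ × ℝ}

lemma one_le_of_snd_zsmul_pos (hr : 0 < r.2) {k : ℤ} (hk : 0 < (k • r).2) : (1 : ℝ) ≤ k := by
  have : (0 : ℝ) < k := pos_of_mul_pos_left (by simpa using hk) hr.le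
  exact_mod_cast (show (0 : ℤ) < k by exact_mod_cast this)

lemma ne_zsmul_of_fst_mem {I : Set ℝ} (hI : I.OrdConnected) (h0 : 0 ∈ I) (hr : r.1 ∉ I)
    (hr2 : 0 < r.2) {p : ℝ × ℝ} (hp1 : p.1 ∈ I) (hp2 : 0 < p.2) (k : ℤ) : p ≠ k • r := by
  rintro rfl
  have hk := one_le_of_snd_zsmul_pos hr2 hp2
  apply hr (hI.uIcc_subset h0 hp1 _)
  rw [Prod.smul_fst, zsmul_eq_mul, mem_uIcc]
  rcases le_total 0 r.1 with h | h
  · exact Or.inl ⟨h, by nlinarith⟩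
  · exact Or.inr ⟨by nlinarith, h⟩

lemma fst_eq_zero_of_snd_eq_zero (hr1 : |r.1| < 1) (hr2 : 0 < r.2) (hlt : r.2 < s.2)
    (hsmin : ∀ p ∈ regA ∩ span ℤ {r, s}, (∀ k : ℤ, p ≠ k • r) → s.2 ≤ p.2)
    {q : ℝ × ℝ} (hq : q ∈ span ℤ {r, s}) (hq1 : |q.1| < 1) (hq2 : q.2 = 0) : q.1 = 0 := by
  wlog hsign : 0 ≤ r.1 * q.1 generalizing q
  · have := this (neg_mem hq) (by simpa using hq1) (by simp [hq2]) (by simp; nlinarith)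
    simpa using this
  by_contra hq0
  have hw : r - q ∈ span ℤ {r, s} := sub_mem (subset_span (by simp)) hq
  have hwA : r - q ∈ regA := by
    refine mem_regA_iff.2 ⟨?_, by simpa [hq2] using hr2⟩
    rw [abs_lt] at hr1 hq1 ⊢
    simp only [Prod.fst_sub]
    rcases le_total 0 r.1 with h | h <;> rcases le_total 0 q.1 with h' | h' <;>
      constructor <;> nlinarith
  have hwr : ∀ k : ℤ, r - q ≠ k • r := by
    intro k hk
    have hk2 : (k : ℝ) * r.2 = r.2 := by simpa [hq2] using (congrArg Prod.snd hk).symm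
    obtain rfl : k = 1 := by exact_mod_cast (mul_eq_right₀ hr2.ne').1 hk2
    rw [one_smul, sub_eq_self] at hk
    exact hq0 (by simp [hk])
  have := hsmin _ ⟨hwA, hw⟩ hwr
  simp [hq2] at this
  linarith

lemma snd_le_of_fst_ne_zero (hr1 : |r.1| < 1) (hr2 : 0 < r.2) (hlt : r.2 < s.2)
    (hrmin : ∀ p ∈ regA ∩ span ℤ {r, s}, r.2 ≤ p.2)
    (hsmin : ∀ p ∈ regA ∩ span ℤ {r, s}, (∀ k : ℤ, p ≠ k • r) → s.2 ≤ p.2)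
    {q : ℝ × ℝ} (hq : q ∈ span ℤ {r, s}) (hq1 : |q.1| < 1) (hq0 : q.1 ≠ 0) (hq2 : 0 ≤ q.2) :
    r.2 ≤ q.2 := by
  rcases hq2.lt_or_eq with hq2 | hq2
  · exact hrmin q ⟨mem_regA_iff.2 ⟨hq1, hq2⟩, hq⟩
  · exact absurd (fst_eq_zero_of_snd_eq_zero hr1 hr2 hlt hsmin hq hq1 hq2.symm) hq0

lemma add_snd_le_of_fst_mem_uIoo (hr1 : |r.1| < 1) (hs1 : |s.1| < 1) (hsign : r.1 * s.1 < 0)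
    (hr2 : 0 < r.2) (hlt : r.2 < s.2)
    (hrmin : ∀ p ∈ regA ∩ span ℤ {r, s}, r.2 ≤ p.2)
    (hsmin : ∀ p ∈ regA ∩ span ℤ {r, s}, (∀ k : ℤ, p ≠ k • r) → s.2 ≤ p.2)
    {q : ℝ × ℝ} (hq : q ∈ span ℤ {r, s}) (hq2 : 0 < q.2) (hq1 : q.1 ∈ uIoo r.1 s.1) :
    r.2 + s.2 ≤ q.2 := by
  have hr : r ∈ span ℤ {r, s} := subset_span (by simp)
  have hs : s ∈ span ℤ {r, s} := subset_span (by simp)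
  have h0 : (0 : ℝ) ∈ uIoo r.1 s.1 := by
    rcases lt_or_gt_of_ne (left_ne_zero_of_mul hsign.ne) with h | h
    · exact mem_uIoo_of_lt h (by nlinarith)
    · exact mem_uIoo_of_gt (by nlinarith) h
  have hqabs : |q.1| < 1 := by
    rw [abs_lt] at hr1 hs1
    exact abs_lt.2 (uIoo_subset_Ioo ⟨hr1.1.le, hr1.2.le⟩ ⟨hs1.1.le, hs1.2.le⟩ hq1)
  have hqr : ∀ k : ℤ, q ≠ k • r :=
    ne_zsmul_of_fst_mem ordConnected_Ioo h0 left_notMem_uIoo hr2 hq1 hq2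
  have hsq : s.2 ≤ q.2 := hsmin q ⟨mem_regA_iff.2 ⟨hqabs, hq2⟩, hq⟩ hqr
  by_cases hx : |q.1 - r.1| < 1
  · have hqr' : ∀ k : ℤ, q - r ≠ k • r := fun k hk ↦
      hqr (k + 1) (by rw [add_smul, one_smul, ← hk, sub_add_cancel])
    have := hsmin (q - r) ⟨mem_regA_iff.2 ⟨by simpa using hx, by simp; linarith⟩,
      sub_mem hq hr⟩ hqr'
    simp only [Prod.snd_sub] at this
    linarith
  · have hqs : q.1 - s.1 ≠ 0 := sub_ne_zero.2 fun h ↦ right_notMem_uIoo (h ▸ hq1)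
    have := snd_le_of_fst_ne_zero hr1 hr2 hlt hrmin hsmin (sub_mem hq hs)
      (by simpa using abs_sub_lt_one_of_mem_uIoo hr1 hs1 hq1 (not_lt.1 hx)) (by simpa using hqs)
      (by simpa using hsq)
    simp only [Prod.snd_sub] at this
    linarith

theorem min_attained_at_basis_general (r s : ℝ × ℝ)
    (hr2 : 0 < r.2)
    (hr1 : |r.1| < 1) (hs1 : |s.1| < 1) (hsign : r.1 * s.1 < 0)
    (hrmin : ∀ p ∈ regA ∩ {p : ℝ × ℝ | ∃ m n : ℤ, p = m • r + n • s}, r.2 ≤ p.2)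
    (hsmin : ∀ p ∈ regA ∩ {p : ℝ × ℝ | ∃ m n : ℤ, p = m • r + n • s},
        (∀ k : ℤ, p ≠ k • r) → s.2 ≤ p.2)
    (hlt : r.2 < s.2)
    (t : ℝ) (ht : 0 < t) (ht1 : t ≤ 1) :
    ∃ p : ℝ × ℝ, (p = r ∨ p = s ∨ p = r + s) ∧
      IsLeast { y : ℝ | 0 < y ∧ ∃ x : ℝ,
          (x, y) ∈ {p : ℝ × ℝ | ∃ m n : ℤ, p = m • r + n • s} ∧
          -t < x ∧ x ≤ 1 - t } p.2 := by
  rw [setOf_exists_zsmul_add_zsmul] at hrmin hsmin ⊢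
  have hr : r ∈ span ℤ {r, s} := subset_span (by simp)
  have hs : s ∈ span ℤ {r, s} := subset_span (by simp)
  have hA {x y : ℝ} (hy : 0 < y) (hx : x ∈ Ioc (-t) (1 - t)) : (x, y) ∈ regA :=
    mem_regA_iff.2 ⟨abs_lt.2 ⟨by linarith [hx.1], by linarith [hx.2]⟩, hy⟩
  by_cases hrt : r.1 ∈ Ioc (-t) (1 - t)
  · refine ⟨r, .inl rfl, ⟨hr2, r.1, hr, hrt⟩, ?_⟩
    rintro y ⟨hy, x, hxy, hx⟩
    exact hrmin _ ⟨hA hy hx, hxy⟩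
  by_cases hst : s.1 ∈ Ioc (-t) (1 - t)
  · refine ⟨s, .inr (.inl rfl), ⟨hr2.trans hlt, s.1, hs, hst⟩, ?_⟩
    rintro y ⟨hy, x, hxy, hx⟩
    exact hsmin _ ⟨hA hy hx, hxy⟩ <|
      ne_zsmul_of_fst_mem ordConnected_Ioc ⟨by linarith, by linarith⟩ hrt hr2 hx hy
  refine ⟨r + s, .inr (.inr rfl), ⟨by simp; linarith, r.1 + s.1, add_mem hr hs,
    add_mem_Ioc_of_notMem ht ht1 hr1 hs1 hsign hrt hst⟩, ?_⟩
  rintro y ⟨hy, x, hxy, hx⟩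
  exact add_snd_le_of_fst_mem_uIoo hr1 hs1 hsign hr2 hlt hrmin hsmin hxy hy
    (Ioc_subset_uIoo_of_notMem ht ht1 hsign hrt hst hx)

/-- The minimum is attained at one of r, s or r + s. -/
theorem min_attained_at_basis (r s : ℝ × ℝ)
    (hr2 : 0 < r.2) (hs2 : 0 < s.2)
    (hr1 : |r.1| < 1) (hs1 : |s.1| < 1) (hsign : r.1 * s.1 < 0)
    (hrmin : ∀ p ∈ regA ∩ {p : ℝ × ℝ | ∃ m n : ℤ, p = m • r + n • s}, r.2 ≤ p.2)
    (hsmin : ∀ p ∈ regA ∩ {p : ℝ × ℝ | ∃ m n : ℤ, p = m • r + n • s},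
        (∀ k : ℤ, p ≠ k • r) → s.2 ≤ p.2)
    (hlt : r.2 < s.2)
    (t : ℝ) (ht : 0 < t) (ht1 : t ≤ 1) :
    ∃ p : ℝ × ℝ, (p = r ∨ p = s ∨ p = r + s) ∧
      IsLeast { y : ℝ | 0 < y ∧ ∃ x : ℝ,
          (x, y) ∈ {p : ℝ × ℝ | ∃ m n : ℤ, p = m • r + n • s} ∧
          -t < x ∧ x ≤ 1 - t } p.2 :=
  min_attained_at_basis_general r s hr2 hr1 hs1 hsign hrmin hsmin hlt t ht ht1
end
end
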